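/- arXiv:2010.00369 — 2 statements merged into one kernel-verified Lean document; each statement's English description precedes it below -/
import Mathlib

section
/- Let M be a module over a commutative ring k and n ≥ 1 a natural number such that n·1 is invertible in k. Define maps h : SymmetricPower^p M ⊗ ExteriorPower^q M → SymmetricPower^{p-1} M ⊗ ExteriorPower^{q+1} M by h(a_1⋯a_p ⊗ β) = Σ_i a_1⋯â_i⋯a_p ⊗ (a_i ∧ β), and ∂ : SymmetricPower^p M ⊗ ExteriorPower^q M → SymmetricPower^{p+1} M ⊗ ExteriorPower^{q-1} M by ∂(α ⊗ b_1∧⋯∧b_q) = Σ_j (-1)^{j+1} (α·b_j) ⊗ b_1∧⋯∧b̂_j∧⋯∧b_q. Then ∂∘h + h∘∂ = (p+q)·id on SymmetricPower^p M ⊗ ExteriorPower^q M. -/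
/-!
STATEMENT 0: For a module `M` over a commutative ring `k` and `n ≥ 1` with `n·1` invertible in
`k`, the contraction maps `h` and the Koszul differentials `∂` between
`SymmetricPower^p M ⊗ ExteriorPower^q M` pieces satisfy `∂∘h + h∘∂ = (p+q)·id`.

Symmetric powers are defined as the quotient of tensor powers by the permutation action;
exterior powers are Mathlib's `⋀[k]^q M`.  The maps `h` and `∂` are characterized by their
values on generators, exactly as in the informal statement.
-/

open scoped TensorProduct

set_option maxHeartbeats 1000000
set_option synthInstance.maxHeartbeats 400000

noncomputable section

variable (R : Type*) [CommRing R] (M : Type*) [AddCommGroup M] [Module R M]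

/-- The `n`-th symmetric power of `M`: the quotient of the `n`-th tensor power by the
relations identifying a pure tensor with its permutations. -/
abbrev SymPow (n : ℕ) : Type _ :=
  (⨂[R]^n M) ⧸ Submodule.span R
    {x : ⨂[R]^n M | ∃ (σ : Equiv.Perm (Fin n)) (v : Fin n → M),
      x = PiTensorProduct.tprod R v - PiTensorProduct.tprod R (v ∘ σ)}

/-- The image of `a 0 ⋯ a (n-1)` in the symmetric power. -/
def SymPow.mk (n : ℕ) (a : Fin n → M) : SymPow R M n :=
  Submodule.Quotient.mk (PiTensorProduct.tprod R a)

/-- The wedge `v 0 ∧ ⋯ ∧ v (n-1)` as an element of the `n`-th exterior power. -/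
def wedgeMk (n : ℕ) (v : Fin n → M) : ⋀[R]^n M :=
  ⟨ExteriorAlgebra.ιMulti R n v, by
    rw [← ExteriorAlgebra.ιMulti_span_fixedDegree]
    exact Submodule.subset_span ⟨v, rfl⟩⟩

-- helper lemmas
lemma symPow_mk_comp_perm (n : ℕ) (σ : Equiv.Perm (Fin n)) (a : Fin n → M) :
    SymPow.mk R M n (a ∘ σ) = SymPow.mk R M n a := by
  rw [SymPow.mk, SymPow.mk, Submodule.Quotient.eq]
  refine Submodule.subset_span ⟨σ⁻¹, a ∘ σ, ?_⟩
  have : (a ∘ ⇑σ) ∘ ⇑σ⁻¹ = a := by funext x; simp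
  rw [this]

lemma fin_snoc_removeNth (p : ℕ) (a : Fin (p + 1) → M) (i : Fin (p + 1)) :
    Fin.snoc (i.removeNth a) (a i) =
      a ∘ ⇑((Fin.revPerm.trans (i.rev.cycleRange.symm)).trans Fin.revPerm) := by
  funext x
  induction x using Fin.lastCases with
  | last =>
    simp [Fin.rev_last, Fin.cycleRange_symm_zero]
  | cast k =>
    simp only [Fin.snoc_castSucc, Equiv.trans_apply, Fin.revPerm_apply, Fin.rev_castSucc,
      Fin.cycleRange_symm_succ, Function.comp_apply, ← Fin.rev_succAbove, Fin.rev_rev]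
    rfl

lemma symPow_mk_snoc_removeNth (p : ℕ) (a : Fin (p + 1) → M) (i : Fin (p + 1)) :
    SymPow.mk R M (p + 1) (Fin.snoc (i.removeNth a) (a i)) = SymPow.mk R M (p + 1) a := by
  rw [fin_snoc_removeNth, symPow_mk_comp_perm]

lemma fin_cons_removeNth (q : ℕ) (b : Fin (q + 1) → M) (j : Fin (q + 1)) :
    Fin.cons (b j) (j.removeNth b) = b ∘ ⇑(j.cycleRange.symm) := by
  funext x
  induction x using Fin.cases with
  | zero => simp [Fin.cycleRange_symm_zero]
  | succ k => simp [Fin.cycleRange_symm_succ]; rfl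

lemma wedgeMk_cons_removeNth (q : ℕ) (b : Fin (q + 1) → M) (j : Fin (q + 1)) :
    wedgeMk R M (q + 1) (Fin.cons (b j) (j.removeNth b)) =
      ((-1 : R) ^ (j : ℕ)) • wedgeMk R M (q + 1) b := by
  apply Subtype.ext
  rw [fin_cons_removeNth]
  show ExteriorAlgebra.ιMulti R (q+1) (b ∘ ⇑(j.cycleRange.symm)) =
    ((-1 : R) ^ (j : ℕ)) • ExteriorAlgebra.ιMulti R (q+1) b
  have := AlternatingMap.map_perm (ExteriorAlgebra.ιMulti R (q+1) (M := M)) b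
    j.cycleRange.symm
  rw [this]
  rw [show (j.cycleRange.symm : Equiv.Perm (Fin (q+1))) = j.cycleRange⁻¹ from rfl]
  rw [Equiv.Perm.sign_inv, Fin.sign_cycleRange]
  rw [Units.smul_def]
  push_cast
  rw [← Int.cast_smul_eq_zsmul R]
  push_cast
  ring_nf

omit [AddCommGroup M] in
lemma fin_removeNth_succ_cons (q : ℕ) (x : M) (b : Fin (q + 1) → M) (j : Fin (q + 1)) :
    (j.succ).removeNth (α := fun _ => M) (Fin.cons x b) = (Fin.cons x (j.removeNth b) : Fin (q+1) → M) := by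
  funext k
  induction k using Fin.cases with
  | zero =>
    have h0 : j.succ.succAbove 0 = 0 := by
      rw [Fin.succAbove_of_castSucc_lt _ _ (by simp [Fin.castSucc_lt_succ_iff])]; rfl
    simp [Fin.removeNth, h0]
  | succ k =>
    simp [Fin.removeNth, Fin.succ_succAbove_succ]

omit [AddCommGroup M] in
lemma fin_removeNth_castSucc_snoc (p : ℕ) (a : Fin (p + 1) → M) (x : M) (i : Fin (p + 1)) :
    (i.castSucc).removeNth (α := fun _ => M) (Fin.snoc a x) = (Fin.snoc (i.removeNth a) x : Fin (p+1) → M) := by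
  funext k
  induction k using Fin.lastCases with
  | last =>
    have h0 : i.castSucc.succAbove (Fin.last p) = Fin.last (p + 1) := by
      rw [Fin.succAbove_of_le_castSucc _ _ (by simp [Fin.castSucc_le_castSucc_iff, Fin.le_last])]
      rfl
    simp [Fin.removeNth, h0]
  | cast k =>
    simp [Fin.removeNth, Fin.castSucc_succAbove_castSucc]

lemma symPow_span (n : ℕ) :
    Submodule.span R (Set.range (SymPow.mk R M n)) = ⊤ := by
  have : Set.range (SymPow.mk R M n) =
      (Submodule.mkQ _) '' (Set.range (PiTensorProduct.tprod R)) := by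
    rw [← Set.range_comp]; rfl
  rw [this, ← Submodule.map_span, PiTensorProduct.span_tprod_eq_top, Submodule.map_top,
    Submodule.range_mkQ]

lemma wedgeMk_span (n : ℕ) :
    Submodule.span R (Set.range (wedgeMk R M n)) = ⊤ := by
  apply Submodule.map_injective_of_injective (Submodule.injective_subtype (⋀[R]^n M))
  rw [Submodule.map_span, Submodule.map_top, Submodule.range_subtype]
  have : (⋀[R]^n M).subtype '' (Set.range (wedgeMk R M n)) =
      Set.range (ExteriorAlgebra.ιMulti R n (M := M)) := by
    rw [← Set.range_comp]; rfl
  rw [this, ExteriorAlgebra.ιMulti_span_fixedDegree]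

lemma tensor_ext {p q : ℕ} {N : Type*} [AddCommMonoid N] [Module R N]
    (F G : (SymPow R M p ⊗[R] (⋀[R]^q M)) →ₗ[R] N)
    (H : ∀ (a : Fin p → M) (b : Fin q → M),
      F (SymPow.mk R M p a ⊗ₜ[R] wedgeMk R M q b) =
      G (SymPow.mk R M p a ⊗ₜ[R] wedgeMk R M q b)) : F = G := by
  apply TensorProduct.ext'
  intro x y
  have hx : x ∈ Submodule.span R (Set.range (SymPow.mk R M p)) := by
    rw [symPow_span]; trivial
  have hy : y ∈ Submodule.span R (Set.range (wedgeMk R M q)) := by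
    rw [wedgeMk_span]; trivial
  induction hx using Submodule.span_induction with
  | mem x hx =>
    obtain ⟨a, rfl⟩ := hx
    induction hy using Submodule.span_induction with
    | mem y hy => obtain ⟨b, rfl⟩ := hy; exact H a b
    | zero => rw [TensorProduct.tmul_zero, map_zero, map_zero]
    | add y z _ _ h1 h2 => simp only [TensorProduct.tmul_add, map_add, h1, h2]
    | smul r y _ h1 => rw [TensorProduct.tmul_smul, map_smul, map_smul, h1]
  | zero => rw [TensorProduct.zero_tmul, map_zero, map_zero]
  | add x z _ _ h1 h2 => simp only [TensorProduct.add_tmul, map_add, h1, h2]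
  | smul r x _ h1 => rw [← TensorProduct.smul_tmul', map_smul, map_smul, h1]

lemma nsmul_id_apply (p q k : ℕ) (z : SymPow R M p ⊗[R] (⋀[R]^q M)) :
    (k • (LinearMap.id : (SymPow R M p ⊗[R] (⋀[R]^q M)) →ₗ[R] _)) z = ∑ _i : Fin k, z := by
  induction k with
  | zero => simp
  | succ m ih => rw [succ_nsmul, LinearMap.add_apply, ih, Fin.sum_univ_castSucc]; simp

theorem statement0 (n : ℕ) (hn : 1 ≤ n) (hunit : IsUnit (n : R))
    -- the contraction maps `h : S^{p+1} ⊗ Λ^q → S^p ⊗ Λ^{q+1}`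
    (h : ∀ p q : ℕ, (SymPow R M (p + 1) ⊗[R] (⋀[R]^q M)) →ₗ[R]
      (SymPow R M p ⊗[R] (⋀[R]^(q + 1) M)))
    -- the Koszul differentials `∂ : S^p ⊗ Λ^{q+1} → S^{p+1} ⊗ Λ^q`
    (d : ∀ p q : ℕ, (SymPow R M p ⊗[R] (⋀[R]^(q + 1) M)) →ₗ[R]
      (SymPow R M (p + 1) ⊗[R] (⋀[R]^q M)))
    -- `h (a_1 ⋯ a_{p+1} ⊗ β) = ∑ i, a_1 ⋯ â_i ⋯ a_{p+1} ⊗ (a_i ∧ β)`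
    (hh : ∀ (p q : ℕ) (a : Fin (p + 1) → M) (b : Fin q → M),
      h p q (SymPow.mk R M (p + 1) a ⊗ₜ[R] wedgeMk R M q b) =
        ∑ i : Fin (p + 1),
          SymPow.mk R M p (i.removeNth a) ⊗ₜ[R] wedgeMk R M (q + 1) (Fin.cons (a i) b))
    -- `∂ (α ⊗ b_1 ∧ ⋯ ∧ b_{q+1}) = ∑ j, (-1)^{j+1} (α · b_j) ⊗ b_1 ∧ ⋯ b̂_j ⋯ ∧ b_{q+1}`
    -- (with `0`-based indexing the sign is `(-1)^j`)
    (hd : ∀ (p q : ℕ) (a : Fin p → M) (b : Fin (q + 1) → M),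
      d p q (SymPow.mk R M p a ⊗ₜ[R] wedgeMk R M (q + 1) b) =
        ∑ j : Fin (q + 1), ((-1 : R) ^ (j : ℕ)) •
          (SymPow.mk R M (p + 1) (Fin.snoc a (b j)) ⊗ₜ[R] wedgeMk R M q (j.removeNth b))) :
    -- `∂∘h + h∘∂ = (p+q)·id` on `S^p ⊗ Λ^q`, including the edge cases `p = 0` or `q = 0`
    (∀ p q : ℕ,
      (d p (q + 1)) ∘ₗ (h p (q + 1)) + (h (p + 1) q) ∘ₗ (d (p + 1) q) =
        ((p + 1) + (q + 1)) •
          (LinearMap.id : (SymPow R M (p + 1) ⊗[R] (⋀[R]^(q + 1) M)) →ₗ[R] _)) ∧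
    (∀ p : ℕ, (d p 0) ∘ₗ (h p 0) =
        (p + 1) • (LinearMap.id : (SymPow R M (p + 1) ⊗[R] (⋀[R]^(0 : ℕ) M)) →ₗ[R] _)) ∧
    (∀ q : ℕ, (h 0 q) ∘ₗ (d 0 q) =
        (q + 1) • (LinearMap.id : (SymPow R M 0 ⊗[R] (⋀[R]^(q + 1) M)) →ₗ[R] _)) := by
  refine ⟨?_, ?_, ?_⟩
  · -- main case
    intro p q
    apply tensor_ext
    intro a b
    have termA : ∀ i : Fin (p + 1),
        d p (q + 1) (SymPow.mk R M p (i.removeNth a) ⊗ₜ[R]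
          wedgeMk R M (q + 1 + 1) (Fin.cons (a i) b)) =
        (SymPow.mk R M (p + 1) a ⊗ₜ[R] wedgeMk R M (q + 1) b) + ∑ j : Fin (q + 1), ((-1 : R) ^ ((j : ℕ) + 1)) • (SymPow.mk R M (p + 1) (Fin.snoc (i.removeNth a) (b j)) ⊗ₜ[R] wedgeMk R M (q + 1) (Fin.cons (a i) (j.removeNth b))) := by
      intro i
      rw [hd p (q + 1) (i.removeNth a) (Fin.cons (a i) b), Fin.sum_univ_succ]
      congr 1
      · simp only [Fin.val_zero, pow_zero, one_smul, Fin.cons_zero, Fin.removeNth_zero,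
          Fin.tail_cons, symPow_mk_snoc_removeNth]
      · refine Finset.sum_congr rfl fun j _ => ?_
        rw [Fin.cons_succ, fin_removeNth_succ_cons, Fin.val_succ]
    have claimA : (d p (q + 1)) ((h p (q + 1)) (SymPow.mk R M (p + 1) a ⊗ₜ[R] wedgeMk R M (q + 1) b)) =
        (∑ _i : Fin (p + 1), (SymPow.mk R M (p + 1) a ⊗ₜ[R] wedgeMk R M (q + 1) b))
          + ∑ i : Fin (p + 1), ∑ j : Fin (q + 1), ((-1 : R) ^ ((j : ℕ) + 1)) • (SymPow.mk R M (p + 1) (Fin.snoc (i.removeNth a) (b j)) ⊗ₜ[R] wedgeMk R M (q + 1) (Fin.cons (a i) (j.removeNth b))) := by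
      rw [hh, map_sum, Finset.sum_congr rfl fun i _ => termA i, Finset.sum_add_distrib]
    have termB : ∀ j : Fin (q + 1),
        h (p + 1) q (((-1 : R) ^ (j : ℕ)) •
          (SymPow.mk R M (p + 1 + 1) (Fin.snoc a (b j)) ⊗ₜ[R]
            wedgeMk R M q (j.removeNth b))) =
        (SymPow.mk R M (p + 1) a ⊗ₜ[R] wedgeMk R M (q + 1) b) + ∑ i : Fin (p + 1), ((-1 : R) ^ (j : ℕ)) • (SymPow.mk R M (p + 1) (Fin.snoc (i.removeNth a) (b j)) ⊗ₜ[R] wedgeMk R M (q + 1) (Fin.cons (a i) (j.removeNth b))) := by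
      intro j
      rw [map_smul, hh (p + 1) q (Fin.snoc a (b j)) (j.removeNth b), Fin.sum_univ_castSucc]
      have hlast : SymPow.mk R M (p + 1)
            ((Fin.last (p + 1)).removeNth (α := fun _ => M) (Fin.snoc a (b j)))
            ⊗ₜ[R] wedgeMk R M (q + 1)
              (Fin.cons (Fin.snoc (α := fun _ => M) a (b j) (Fin.last (p + 1)))
                (j.removeNth b)) =
          ((-1 : R) ^ (j : ℕ)) • (SymPow.mk R M (p + 1) a ⊗ₜ[R] wedgeMk R M (q + 1) b) := by
        rw [Fin.removeNth_last, Fin.init_snoc, Fin.snoc_last, wedgeMk_cons_removeNth,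
          TensorProduct.tmul_smul]
      rw [hlast, smul_add, smul_smul, ← pow_add, Even.neg_one_pow ⟨(j : ℕ), rfl⟩, one_smul,
        Finset.smul_sum,
        add_comm _ (SymPow.mk R M (p + 1) a ⊗ₜ[R] wedgeMk R M (q + 1) b)]
      congr 1
      refine Finset.sum_congr rfl fun i _ => ?_
      rw [fin_removeNth_castSucc_snoc, Fin.snoc_castSucc]
    have claimB : (h (p + 1) q) ((d (p + 1) q) (SymPow.mk R M (p + 1) a ⊗ₜ[R] wedgeMk R M (q + 1) b)) =
        (∑ _j : Fin (q + 1), (SymPow.mk R M (p + 1) a ⊗ₜ[R] wedgeMk R M (q + 1) b))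
          + ∑ i : Fin (p + 1), ∑ j : Fin (q + 1), ((-1 : R) ^ (j : ℕ)) • (SymPow.mk R M (p + 1) (Fin.snoc (i.removeNth a) (b j)) ⊗ₜ[R] wedgeMk R M (q + 1) (Fin.cons (a i) (j.removeNth b))) := by
      rw [hd (p + 1) q a b, map_sum, Finset.sum_congr rfl fun j _ => termB j,
        Finset.sum_add_distrib]
      congr 1
      exact Finset.sum_comm
    have cancel :
        (∑ i : Fin (p + 1), ∑ j : Fin (q + 1), ((-1 : R) ^ ((j : ℕ) + 1)) • (SymPow.mk R M (p + 1) (Fin.snoc (i.removeNth a) (b j)) ⊗ₜ[R] wedgeMk R M (q + 1) (Fin.cons (a i) (j.removeNth b))))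
          + ∑ i : Fin (p + 1), ∑ j : Fin (q + 1), ((-1 : R) ^ (j : ℕ)) • (SymPow.mk R M (p + 1) (Fin.snoc (i.removeNth a) (b j)) ⊗ₜ[R] wedgeMk R M (q + 1) (Fin.cons (a i) (j.removeNth b))) = 0 := by
      rw [← Finset.sum_add_distrib]
      refine Finset.sum_eq_zero fun i _ => ?_
      rw [← Finset.sum_add_distrib]
      refine Finset.sum_eq_zero fun j _ => ?_
      rw [← add_smul]
      have hc : (-1 : R) ^ ((j : ℕ) + 1) + (-1 : R) ^ (j : ℕ) = 0 := by ring
      rw [hc, zero_smul]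
    rw [LinearMap.add_apply, LinearMap.comp_apply, LinearMap.comp_apply, nsmul_id_apply,
      claimA, claimB, add_add_add_comm, cancel, add_zero]
    simp only [Finset.sum_const, Finset.card_univ, Fintype.card_fin]
    exact (add_nsmul _ (p + 1) (q + 1)).symm
  · -- q = 0 case
    intro p
    apply tensor_ext
    intro a b
    rw [LinearMap.comp_apply, hh p 0 a b, map_sum, nsmul_id_apply]
    refine Finset.sum_congr rfl fun i _ => ?_
    rw [hd p 0 (i.removeNth a) (Fin.cons (a i) b), Fin.sum_univ_one]
    have hb : (0 : Fin 1).removeNth (α := fun _ => M) (Fin.cons (a i) b) = b := by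
      funext x; exact x.elim0
    simp only [Fin.val_zero, pow_zero, one_smul, Fin.cons_zero, hb, symPow_mk_snoc_removeNth]
  · -- p = 0 case
    intro q
    apply tensor_ext
    intro a b
    rw [LinearMap.comp_apply, hd 0 q a b, map_sum, nsmul_id_apply]
    refine Finset.sum_congr rfl fun j _ => ?_
    rw [map_smul, hh 0 q (Fin.snoc a (b j)) (j.removeNth b), Fin.sum_univ_one]
    have h1 : (0 : Fin 1).removeNth (α := fun _ => M) (Fin.snoc a (b j)) = a := by
      funext x; exact x.elim0
    have h2 : (Fin.snoc (α := fun _ => M) a (b j)) 0 = b j := by simp [Fin.snoc]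
    rw [h1, h2, wedgeMk_cons_removeNth, TensorProduct.tmul_smul, smul_smul, ← pow_add,
      Even.neg_one_pow ⟨(j : ℕ), rfl⟩, one_smul]

end
end

section
/- Let R be a ring, S a subring, and C a pure acyclic chain complex of right S-modules (i.e., C ⊗_S A is acyclic for every left S-module A). If P is a left R-module that is a direct summand of a module of the form R ⊗_S A for some left S-module A, then the complex C ⊗_R P is acyclic. -/
/-!
STATEMENT 8: Let `R` be a ring, `S` a subring, and `C` a pure acyclic chain complex of right
`S`-modules (i.e. `C ⊗_S A` is acyclic for every left `S`-module `A`); here `C` is a complex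
of right `R`-modules regarded as `S`-modules by restriction.  If `P` is a left `R`-module
that is a direct summand of a module of the form `R ⊗_S A` for some left `S`-module `A`,
then `C ⊗_R P` is acyclic.

Since Mathlib has no tensor product over noncommutative rings, we construct the tensor
product `Tens S M A` of a right `S`-module and a left `S`-module by generators and
relations, and `R ⊗_S A` is encoded by its universal property.
-/

noncomputable section

universe u

variable (S : Type u) [Ring S]

/-- The relations defining the tensor product `M ⊗_S A` of a right `S`-module `M` and a
left `S`-module `A`: biadditivity and `S`-balancedness. -/
def tensRels (M : Type u) [AddCommGroup M] [Module Sᵐᵒᵖ M]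
    (A : Type u) [AddCommGroup A] [Module S A] :
    AddSubgroup (FreeAbelianGroup (M × A)) :=
  AddSubgroup.closure
    ({x | ∃ m m' a, x = FreeAbelianGroup.of (m + m', a) - FreeAbelianGroup.of (m, a)
        - FreeAbelianGroup.of (m', a)} ∪
     {x | ∃ m a a', x = FreeAbelianGroup.of (m, a + a') - FreeAbelianGroup.of (m, a)
        - FreeAbelianGroup.of (m, a')} ∪
     {x | ∃ (m : M) (s : S) (a : A),
        x = FreeAbelianGroup.of (MulOpposite.op s • m, a) - FreeAbelianGroup.of (m, s • a)})

/-- The tensor product `M ⊗_S A` of a right `S`-module `M` and a left `S`-module `A`,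
as an abelian group. -/
abbrev Tens (M : Type u) [AddCommGroup M] [Module Sᵐᵒᵖ M]
    (A : Type u) [AddCommGroup A] [Module S A] : Type u :=
  FreeAbelianGroup (M × A) ⧸ tensRels S M A

/-- Functoriality of `Tens` in the right-module variable: `f ⊗ id`. -/
def Tens.map {M M' : Type u} [AddCommGroup M] [Module Sᵐᵒᵖ M] [AddCommGroup M']
    [Module Sᵐᵒᵖ M'] (f : M →ₗ[Sᵐᵒᵖ] M')
    (A : Type u) [AddCommGroup A] [Module S A] :
    Tens S M A →+ Tens S M' A :=
  QuotientAddGroup.lift _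
    ((QuotientAddGroup.mk' (tensRels S M' A)).comp
      (FreeAbelianGroup.lift fun p => FreeAbelianGroup.of (f p.1, p.2)))
    (by
      intro x hx
      have hle : tensRels S M A ≤
          ((QuotientAddGroup.mk' (tensRels S M' A)).comp
            (FreeAbelianGroup.lift fun p : M × A =>
              FreeAbelianGroup.of (f p.1, p.2))).ker := by
        apply AddSubgroup.closure_le _ |>.mpr
        rintro y ((⟨m, m', a, rfl⟩ | ⟨m, a, a', rfl⟩) | ⟨m, s, a, rfl⟩) <;>
          · rw [SetLike.mem_coe, AddMonoidHom.mem_ker, AddMonoidHom.comp_apply]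
            simp only [map_sub, map_add, map_smul, FreeAbelianGroup.lift_apply_of]
            simp only [← map_sub]
            rw [QuotientAddGroup.mk'_apply, QuotientAddGroup.eq_zero_iff]
            apply AddSubgroup.subset_closure
            first
              | exact Or.inl (Or.inl ⟨f m, f m', a, rfl⟩)
              | exact Or.inl (Or.inr ⟨f m, a, a', rfl⟩)
              | exact Or.inr ⟨f m, s, a, rfl⟩
      exact AddMonoidHom.mem_ker.mp (hle hx))


/-
Base change cancels: `M ⊗_R (R ⊗_S A) ≅ M ⊗_S A`, naturally in the right `R`-module `M`,
via `m ⊗ (r ⊗ a) ↦ m r ⊗ a` and `m ⊗ a ↦ m ⊗ (1 ⊗ a)`. Hence `C ⊗_R (R ⊗_S A)` is isomorphic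
to the exact complex `C ⊗_S A`, and `C ⊗_R P` is a retract of it whenever `P` is a direct
summand of `R ⊗_S A`. A retract of an exact sequence is exact.
-/

open MulOpposite

theorem Function.Exact.of_retract {X₂ X₁ X₀ Y₂ Y₁ Y₀ : Type*}
    [AddCommGroup X₂] [AddCommGroup X₁] [AddCommGroup X₀]
    [AddCommGroup Y₂] [AddCommGroup Y₁] [AddCommGroup Y₀]
    {f : X₂ →+ X₁} {g : X₁ →+ X₀} {f' : Y₂ →+ Y₁} {g' : Y₁ →+ Y₀}
    (hfg : Function.Exact f g)
    (s₂ : Y₂ →+ X₂) (s₁ : Y₁ →+ X₁) (s₀ : Y₀ →+ X₀)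
    (r₂ : X₂ →+ Y₂) (r₁ : X₁ →+ Y₁) (r₀ : X₀ →+ Y₀)
    (hrs : ∀ y, r₁ (s₁ y) = y)
    (hs₂ : ∀ y, f (s₂ y) = s₁ (f' y)) (hs₁ : ∀ y, g (s₁ y) = s₀ (g' y))
    (hr₂ : ∀ x, f' (r₂ x) = r₁ (f x)) (hr₁ : ∀ x, g' (r₁ x) = r₀ (g x)) :
    Function.Exact f' g' := by
  intro y
  constructor
  · intro hy
    obtain ⟨x, hx⟩ := (hfg (s₁ y)).mp (by rw [hs₁, hy, map_zero])
    exact ⟨r₂ x, by rw [hr₂, hx, hrs]⟩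
  · rintro ⟨z, rfl⟩
    calc g' (f' z) = g' (r₁ (f (s₂ z))) := by rw [hs₂, hrs]
      _ = 0 := by rw [hr₁, hfg.apply_apply_eq_zero, map_zero]

namespace Tens

variable {K : Type u} [Ring K]
  {M M' : Type u} [AddCommGroup M] [Module Kᵐᵒᵖ M] [AddCommGroup M'] [Module Kᵐᵒᵖ M']
  {A A' : Type u} [AddCommGroup A] [Module K A] [AddCommGroup A'] [Module K A']
  {B : Type u} [AddCommGroup B]

variable (K) in
def tmul (m : M) (a : A) : Tens K M A :=
  QuotientAddGroup.mk (FreeAbelianGroup.of (m, a))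

theorem add_tmul (m m' : M) (a : A) : tmul K (m + m') a = tmul K m a + tmul K m' a := by
  rw [← sub_eq_zero, ← sub_sub]
  exact (QuotientAddGroup.eq_zero_iff _).mpr
    (AddSubgroup.subset_closure (Or.inl (Or.inl ⟨m, m', a, rfl⟩)))

theorem tmul_add (m : M) (a a' : A) : tmul K m (a + a') = tmul K m a + tmul K m a' := by
  rw [← sub_eq_zero, ← sub_sub]
  exact (QuotientAddGroup.eq_zero_iff _).mpr
    (AddSubgroup.subset_closure (Or.inl (Or.inr ⟨m, a, a', rfl⟩)))

theorem smul_tmul (m : M) (s : K) (a : A) : tmul K (op s • m) a = tmul K m (s • a) := by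
  rw [← sub_eq_zero]
  exact (QuotientAddGroup.eq_zero_iff _).mpr
    (AddSubgroup.subset_closure (Or.inr ⟨m, s, a, rfl⟩))

theorem hom_ext {φ ψ : Tens K M A →+ B} (h : ∀ m a, φ (tmul K m a) = ψ (tmul K m a)) :
    φ = ψ :=
  QuotientAddGroup.addMonoidHom_ext _ <|
    FreeAbelianGroup.lift_ext _ _ fun p => h p.1 p.2

def lift (h : M → A → B)
    (add_left : ∀ m m' a, h (m + m') a = h m a + h m' a)
    (add_right : ∀ m a a', h m (a + a') = h m a + h m a')
    (smul : ∀ m (s : K) a, h (op s • m) a = h m (s • a)) :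
    Tens K M A →+ B :=
  QuotientAddGroup.lift _ (FreeAbelianGroup.lift fun p => h p.1 p.2) <| by
    refine (AddSubgroup.closure_le _).mpr ?_
    rintro y ((⟨m, m', a, rfl⟩ | ⟨m, a, a', rfl⟩) | ⟨m, s, a, rfl⟩) <;>
      simp [add_left, add_right, smul]

@[simp]
theorem lift_tmul (h : M → A → B) (add_left add_right smul) (m : M) (a : A) :
    lift h add_left add_right smul (tmul K m a) = h m a :=
  FreeAbelianGroup.lift_apply_of _ _

def tmulRight (m : M) : A →+ Tens K M A :=
  AddMonoidHom.mk' (tmul K m) (tmul_add m)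

@[simp]
theorem tmulRight_apply (m : M) (a : A) : tmulRight m a = tmul K m a := rfl

@[simp]
theorem map_tmul (f : M →ₗ[Kᵐᵒᵖ] M') (m : M) (a : A) :
    Tens.map K f A (tmul K m a) = tmul K (f m) a := rfl

def mapRight (M : Type u) [AddCommGroup M] [Module Kᵐᵒᵖ M] (g : A →ₗ[K] A') :
    Tens K M A →+ Tens K M A' :=
  lift (fun m a => tmul K m (g a)) (fun m m' a => add_tmul m m' (g a))
    (fun m a a' => by rw [map_add, tmul_add])
    (fun m s a => by rw [smul_tmul, map_smul])

@[simp]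
theorem mapRight_tmul (g : A →ₗ[K] A') (m : M) (a : A) :
    mapRight M g (tmul K m a) = tmul K m (g a) :=
  lift_tmul _ _ _ _ m a

theorem exact_map_of_retract {M₂ M₁ M₀ : Type u}
    [AddCommGroup M₂] [Module Kᵐᵒᵖ M₂] [AddCommGroup M₁] [Module Kᵐᵒᵖ M₁]
    [AddCommGroup M₀] [Module Kᵐᵒᵖ M₀] {f : M₂ →ₗ[Kᵐᵒᵖ] M₁} {g : M₁ →ₗ[Kᵐᵒᵖ] M₀}
    (i : A →ₗ[K] A') (p : A' →ₗ[K] A) (hpi : p ∘ₗ i = LinearMap.id)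
    (h : Function.Exact (Tens.map K f A') (Tens.map K g A')) :
    Function.Exact (Tens.map K f A) (Tens.map K g A) := by
  have hpi' : (mapRight M₁ p).comp (mapRight M₁ i) = AddMonoidHom.id _ :=
    hom_ext fun m a => by simp [← LinearMap.comp_apply, hpi]
  refine h.of_retract (mapRight M₂ i) (mapRight M₁ i) (mapRight M₀ i)
    (mapRight M₂ p) (mapRight M₁ p) (mapRight M₀ p) (DFunLike.congr_fun hpi') ?_ ?_ ?_ ?_ <;>
  · intro x
    simp only [← AddMonoidHom.comp_apply]
    exact DFunLike.congr_fun (hom_ext fun m a => by simp) x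

end Tens

open Tens

section Induced

variable {R : Type u} [Ring R] (S : Subring R)
  {A Q B : Type u} [AddCommGroup A] [Module S A] [AddCommGroup Q] [Module R Q] [AddCommGroup B]

structure IsBalanced (g : R → A → B) : Prop where
  add_left : ∀ r r' a, g (r + r') a = g r a + g r' a
  add_right : ∀ r a a', g r (a + a') = g r a + g r a'
  mul_smul : ∀ (r : R) (s : S) (a : A), g (r * s) a = g r (s • a)

/-- `t r a` plays the role of `r ⊗ a` in the induced module `Q = R ⊗_S A`. -/
structure IsInduced (t : R → A → Q) : Prop extends IsBalanced S t where
  mul_left : ∀ (r' r : R) (a : A), t (r' * r) a = r' • t r a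
  existsUnique_lift : ∀ (B : Type u) [AddCommGroup B] (g : R → A → B), IsBalanced S g →
    ∃! φ : Q →+ B, ∀ r a, φ (t r a) = g r a

variable {S}

theorem IsBalanced.addMonoidHom_comp {B' : Type u} [AddCommGroup B'] {g : R → A → B}
    (hg : IsBalanced S g) (φ : B →+ B') : IsBalanced S fun r a => φ (g r a) where
  add_left r r' a := by rw [hg.add_left, map_add]
  add_right r a a' := by rw [hg.add_right, map_add]
  mul_smul r s a := by rw [hg.mul_smul]

namespace IsInduced

variable {t : R → A → Q} (ht : IsInduced S t)
include ht

def lift (g : R → A → B) (hg : IsBalanced S g) : Q →+ B :=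
  (ht.existsUnique_lift B g hg).exists.choose

@[simp]
theorem lift_apply (g : R → A → B) (hg : IsBalanced S g) (r : R) (a : A) :
    ht.lift g hg (t r a) = g r a :=
  (ht.existsUnique_lift B g hg).exists.choose_spec r a

theorem hom_ext {φ ψ : Q →+ B} (h : ∀ r a, φ (t r a) = ψ (t r a)) : φ = ψ :=
  (ht.existsUnique_lift B _ (ht.addMonoidHom_comp φ)).unique (fun _ _ => rfl)
    fun r a => (h r a).symm

theorem tens_ext {M : Type u} [AddCommGroup M] [Module Rᵐᵒᵖ M] {Φ Ψ : Tens R M Q →+ B}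
    (h : ∀ m r a, Φ (tmul R m (t r a)) = Ψ (tmul R m (t r a))) : Φ = Ψ :=
  Tens.hom_ext fun m q => DFunLike.congr_fun
    (ht.hom_ext (φ := Φ.comp (tmulRight m)) (ψ := Ψ.comp (tmulRight m)) (h m)) q

variable {M M' : Type u} [AddCommGroup M] [Module Rᵐᵒᵖ M] [Module Sᵐᵒᵖ M]
  [AddCommGroup M'] [Module Rᵐᵒᵖ M'] [Module Sᵐᵒᵖ M']
  (hM : ∀ (s : S) (x : M), op s • x = op (s : R) • x)
  (hM' : ∀ (s : S) (x : M'), op s • x = op (s : R) • x)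

def cancelTmul (m : M) : Q →+ Tens S M A :=
  ht.lift (fun r a => tmul S (op r • m) a)
    { add_left := fun r r' a => by rw [op_add, add_smul, add_tmul]
      add_right := fun r a a' => tmul_add _ a a'
      mul_smul := fun r s a => by rw [op_mul, mul_smul, ← hM, smul_tmul] }

@[simp]
theorem cancelTmul_apply (m : M) (r : R) (a : A) :
    ht.cancelTmul hM m (t r a) = tmul S (op r • m) a :=
  ht.lift_apply _ _ r a

def cancel : Tens R M Q →+ Tens S M A :=
  Tens.lift (fun m q => ht.cancelTmul hM m q)
    (fun m m' q => by
      refine DFunLike.congr_fun (ht.hom_ext (φ := ht.cancelTmul hM (m + m'))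
        (ψ := ht.cancelTmul hM m + ht.cancelTmul hM m') fun r a => ?_) q
      simp [smul_add, add_tmul])
    (fun m q q' => map_add _ q q')
    (fun m r q => by
      refine DFunLike.congr_fun (ht.hom_ext (φ := ht.cancelTmul hM (op r • m))
        (ψ := (ht.cancelTmul hM m).comp (DistribSMul.toAddMonoidHom Q r)) fun r' a => ?_) q
      simp [← ht.mul_left, mul_smul])

@[simp]
theorem cancel_tmul (m : M) (q : Q) : ht.cancel hM (tmul R m q) = ht.cancelTmul hM m q :=
  Tens.lift_tmul _ _ _ _ m q

def cancelInv : Tens S M A →+ Tens R M Q :=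
  Tens.lift (fun m a => tmul R m (t 1 a))
    (fun m m' a => add_tmul m m' _)
    (fun m a a' => by rw [ht.add_right, tmul_add])
    (fun m s a => by rw [hM, smul_tmul, ← ht.mul_left, ← ht.mul_smul, mul_one, one_mul])

@[simp]
theorem cancelInv_tmul (m : M) (a : A) : ht.cancelInv hM (tmul S m a) = tmul R m (t 1 a) :=
  Tens.lift_tmul _ _ _ _ m a

theorem cancelInv_cancel (x : Tens R M Q) : ht.cancelInv hM (ht.cancel hM x) = x :=
  DFunLike.congr_fun (ht.tens_ext (Φ := (ht.cancelInv hM).comp (ht.cancel hM))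
    (Ψ := AddMonoidHom.id _) fun m r a => by simp [smul_tmul, ← ht.mul_left]) x

theorem map_cancel {f : M →ₗ[Rᵐᵒᵖ] M'} {fS : M →ₗ[Sᵐᵒᵖ] M'} (hf : ∀ x, fS x = f x)
    (x : Tens R M Q) :
    Tens.map S fS A (ht.cancel hM x) = ht.cancel hM' (Tens.map R f Q x) :=
  DFunLike.congr_fun (ht.tens_ext (Φ := (Tens.map S fS A).comp (ht.cancel hM))
    (Ψ := (ht.cancel hM').comp (Tens.map R f Q)) fun m r a => by simp [hf]) x

theorem map_cancelInv {f : M →ₗ[Rᵐᵒᵖ] M'} {fS : M →ₗ[Sᵐᵒᵖ] M'} (hf : ∀ x, fS x = f x)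
    (x : Tens S M A) :
    Tens.map R f Q (ht.cancelInv hM x) = ht.cancelInv hM' (Tens.map S fS A x) :=
  DFunLike.congr_fun (Tens.hom_ext (φ := (Tens.map R f Q).comp (ht.cancelInv hM))
    (ψ := (ht.cancelInv hM').comp (Tens.map S fS A)) fun m a => by simp [hf]) x

theorem exact_map_of_exact {M₂ M₁ M₀ : Type u}
    [AddCommGroup M₂] [Module Rᵐᵒᵖ M₂] [Module Sᵐᵒᵖ M₂]
    [AddCommGroup M₁] [Module Rᵐᵒᵖ M₁] [Module Sᵐᵒᵖ M₁]
    [AddCommGroup M₀] [Module Rᵐᵒᵖ M₀] [Module Sᵐᵒᵖ M₀]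
    (h₂ : ∀ (s : S) (x : M₂), op s • x = op (s : R) • x)
    (h₁ : ∀ (s : S) (x : M₁), op s • x = op (s : R) • x)
    (h₀ : ∀ (s : S) (x : M₀), op s • x = op (s : R) • x)
    {f : M₂ →ₗ[Rᵐᵒᵖ] M₁} {g : M₁ →ₗ[Rᵐᵒᵖ] M₀} {fS : M₂ →ₗ[Sᵐᵒᵖ] M₁} {gS : M₁ →ₗ[Sᵐᵒᵖ] M₀}
    (hf : ∀ x, fS x = f x) (hg : ∀ x, gS x = g x)
    (h : Function.Exact (Tens.map S fS A) (Tens.map S gS A)) :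
    Function.Exact (Tens.map R f Q) (Tens.map R g Q) :=
  h.of_retract (ht.cancel h₂) (ht.cancel h₁) (ht.cancel h₀)
    (ht.cancelInv h₂) (ht.cancelInv h₁) (ht.cancelInv h₀) (ht.cancelInv_cancel h₁)
    (ht.map_cancel h₂ h₁ hf) (ht.map_cancel h₁ h₀ hg)
    (ht.map_cancelInv h₂ h₁ hf) (ht.map_cancelInv h₁ h₀ hg)

end IsInduced

end Induced

theorem statement8_general (R : Type u) [Ring R] (S : Subring R)
    (C : ℤ → Type u) [∀ n, AddCommGroup (C n)] [∀ n, Module Rᵐᵒᵖ (C n)]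
    -- the right `S`-module structure on each `C n`, restricting the `R`-module structure
    [∀ n, Module (↥S)ᵐᵒᵖ (C n)]
    (hres : ∀ (n : ℤ) (s : S) (x : C n),
      (MulOpposite.op s) • x = (MulOpposite.op (s : R)) • x)
    -- the differential, and the same map viewed as `S`-linear
    (d : ∀ n : ℤ, C (n + 1) →ₗ[Rᵐᵒᵖ] C n)
    (dS : ∀ n : ℤ, C (n + 1) →ₗ[(↥S)ᵐᵒᵖ] C n)
    (hdS : ∀ (n : ℤ) (x : C (n + 1)), dS n x = d n x)
    -- `C` is pure acyclic as a complex of right `S`-modules: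
    -- `C ⊗_S A` is acyclic for every left `S`-module `A`
    (hpure : ∀ (A : Type u) [AddCommGroup A] [Module ↥S A], ∀ n : ℤ,
      Function.Exact (Tens.map ↥S (dS (n + 1)) A) (Tens.map ↥S (dS n) A))
    -- `P` is a left `R`-module which is a direct summand of a module of the
    -- form `R ⊗_S A`, the latter encoded by its universal property
    (P : Type u) [AddCommGroup P] [Module R P]
    (hP : ∃ (A : Type u) (_ : AddCommGroup A) (_ : Module ↥S A)
        (Q : Type u) (_ : AddCommGroup Q) (_ : Module R Q) (t : R → A → Q),
        (∀ r r' a, t (r + r') a = t r a + t r' a) ∧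
        (∀ r a a', t r (a + a') = t r a + t r a') ∧
        (∀ (r : R) (s : S) (a : A), t (r * (s : R)) a = t r (s • a)) ∧
        (∀ (r' r : R) (a : A), t (r' * r) a = r' • t r a) ∧
        (∀ (B : Type u) (_ : AddCommGroup B) (g : R → A → B),
          (∀ r r' a, g (r + r') a = g r a + g r' a) →
          (∀ r a a', g r (a + a') = g r a + g r a') →
          (∀ (r : R) (s : S) (a : A), g (r * (s : R)) a = g r (s • a)) →
          ∃! φ : Q →+ B, ∀ r a, φ (t r a) = g r a) ∧
        (∃ (pr : Q →ₗ[R] P) (sec : P →ₗ[R] Q), pr ∘ₗ sec = LinearMap.id)) :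
    -- conclusion: `C ⊗_R P` is acyclic
    ∀ n : ℤ, Function.Exact (Tens.map R (d (n + 1)) P) (Tens.map R (d n) P) := by
  obtain ⟨A, _, _, Q, _, _, t, ht₁, ht₂, ht₃, ht₄, huniv, pr, sec, hps⟩ := hP
  have ht : IsInduced S t :=
    { add_left := ht₁, add_right := ht₂, mul_smul := ht₃, mul_left := ht₄
      existsUnique_lift := fun B _ g hg => huniv B _ g hg.add_left hg.add_right hg.mul_smul }
  intro n
  exact Tens.exact_map_of_retract sec pr hps <|
    ht.exact_map_of_exact (hres _) (hres _) (hres _) (hdS _) (hdS _) (hpure A n)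

theorem statement8 (R : Type u) [Ring R] (S : Subring R)
    (C : ℤ → Type u) [∀ n, AddCommGroup (C n)] [∀ n, Module Rᵐᵒᵖ (C n)]
    -- the right `S`-module structure on each `C n`, restricting the `R`-module structure
    [∀ n, Module (↥S)ᵐᵒᵖ (C n)]
    (hres : ∀ (n : ℤ) (s : S) (x : C n),
      (MulOpposite.op s) • x = (MulOpposite.op (s : R)) • x)
    -- the differential, and the same map viewed as `S`-linear
    (d : ∀ n : ℤ, C (n + 1) →ₗ[Rᵐᵒᵖ] C n)
    (dS : ∀ n : ℤ, C (n + 1) →ₗ[(↥S)ᵐᵒᵖ] C n)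
    (hdS : ∀ (n : ℤ) (x : C (n + 1)), dS n x = d n x)
    (hcomplex : ∀ n : ℤ, (d n) ∘ₗ (d (n + 1)) = 0)
    -- `C` is pure acyclic as a complex of right `S`-modules:
    -- `C ⊗_S A` is acyclic for every left `S`-module `A`
    (hpure : ∀ (A : Type u) [AddCommGroup A] [Module ↥S A], ∀ n : ℤ,
      Function.Exact (Tens.map ↥S (dS (n + 1)) A) (Tens.map ↥S (dS n) A))
    -- `P` is a left `R`-module which is a direct summand of a module of the
    -- form `R ⊗_S A`, the latter encoded by its universal property
    (P : Type u) [AddCommGroup P] [Module R P]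
    (hP : ∃ (A : Type u) (_ : AddCommGroup A) (_ : Module ↥S A)
        (Q : Type u) (_ : AddCommGroup Q) (_ : Module R Q) (t : R → A → Q),
        (∀ r r' a, t (r + r') a = t r a + t r' a) ∧
        (∀ r a a', t r (a + a') = t r a + t r a') ∧
        (∀ (r : R) (s : S) (a : A), t (r * (s : R)) a = t r (s • a)) ∧
        (∀ (r' r : R) (a : A), t (r' * r) a = r' • t r a) ∧
        (∀ (B : Type u) (_ : AddCommGroup B) (g : R → A → B),
          (∀ r r' a, g (r + r') a = g r a + g r' a) →
          (∀ r a a', g r (a + a') = g r a + g r a') →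
          (∀ (r : R) (s : S) (a : A), g (r * (s : R)) a = g r (s • a)) →
          ∃! φ : Q →+ B, ∀ r a, φ (t r a) = g r a) ∧
        (∃ (pr : Q →ₗ[R] P) (sec : P →ₗ[R] Q), pr ∘ₗ sec = LinearMap.id)) :
    -- conclusion: `C ⊗_R P` is acyclic
    ∀ n : ℤ, Function.Exact (Tens.map R (d (n + 1)) P) (Tens.map R (d n) P) :=
  statement8_general R S C hres d dS hdS hpure P hP

end
end
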